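/- Let R be a unital ring and let X : ℝᵒᵖ → Mod R be a functor to the category of R-modules. Assume that for each s ∈ ℝ both of the natural maps colim_{t>s} X_t → X_s and X_s → lim_{r<s} X_r are isomorphisms. Then for all reals s ≤ t the transition map X_t → X_s is an isomorphism; that is, the functor X is constant. -/

import Mathlib

open CategoryTheory CategoryTheory.Limits Opposite

/-- The restriction of a functor `X : ℝᵒᵖ ⥤ C` to the (opposite of the) ordered set
`{t : ℝ // s < t}`. -/
def restrictGT {C : Type*} [Category C] (X : ℝᵒᵖ ⥤ C) (s : ℝ) :
    ({t : ℝ // s < t})ᵒᵖ ⥤ C :=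
  (Monotone.functor (f := fun t : {t : ℝ // s < t} => (t : ℝ)) fun _ _ h => h).op ⋙ X

/-- The canonical cocone on `restrictGT X s` with apex `X s`, whose legs are the
transition maps `X t → X s` for `t > s`. -/
def coconeGT {C : Type*} [Category C] (X : ℝᵒᵖ ⥤ C) (s : ℝ) : Cocone (restrictGT X s) where
  pt := X.obj (op s)
  ι :=
    { app := fun t => X.map (homOfLE t.unop.2.le).op
      naturality := fun a b f => by
        dsimp [restrictGT]
        erw [Category.comp_id, ← X.map_comp]
        rfl }

/-- The restriction of a functor `X : ℝᵒᵖ ⥤ C` to the (opposite of the) ordered set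
`{r : ℝ // r < s}`. -/
def restrictLT {C : Type*} [Category C] (X : ℝᵒᵖ ⥤ C) (s : ℝ) :
    ({r : ℝ // r < s})ᵒᵖ ⥤ C :=
  (Monotone.functor (f := fun r : {r : ℝ // r < s} => (r : ℝ)) fun _ _ h => h).op ⋙ X

/-- The canonical cone on `restrictLT X s` with apex `X s`, whose legs are the
transition maps `X s → X r` for `r < s`. -/
def coneLT {C : Type*} [Category C] (X : ℝᵒᵖ ⥤ C) (s : ℝ) : Cone (restrictLT X s) where
  pt := X.obj (op s)
  π :=
    { app := fun r => X.map (homOfLE r.unop.2.le).op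
      naturality := fun a b f => by
        dsimp [restrictLT]
        erw [Category.id_comp, ← X.map_comp]
        rfl }

section Aux

variable {R : Type} [Ring R] (X : ℝᵒᵖ ⥤ ModuleCat R)

lemma aux_map_map {u v w : ℝ} (h1 : v ≤ u) (h2 : w ≤ v) (x : X.obj (op u)) :
    X.map (homOfLE h2).op (X.map (homOfLE h1).op x) = X.map (homOfLE (h2.trans h1)).op x := by
  have h : X.map (homOfLE (h2.trans h1)).op = X.map (homOfLE h1).op ≫ X.map (homOfLE h2).op := by
    rw [← X.map_comp]; rfl
  rw [h]; rfl

lemma aux_map_self {u : ℝ} (h : u ≤ u) (x : X.obj (op u)) :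
    X.map (homOfLE h).op x = x := by
  have : (homOfLE h).op = 𝟙 (op u) := rfl
  rw [this, X.map_id]; rfl

lemma aux_lim_inj (m : ℝ) (hlim : IsIso (limit.lift (restrictLT X m) (coneLT X m)))
    (x : X.obj (op m))
    (hx : ∀ r : {r : ℝ // r < m}, X.map (homOfLE r.2.le).op x = 0) : x = 0 := by
  set L := limit.lift (restrictLT X m) (coneLT X m) with hL
  have hinj : Function.Injective L := (ConcreteCategory.bijective_of_isIso L).1
  apply hinj
  erw [map_zero]
  refine Concrete.limit_ext (restrictLT X m) _ _ fun j => ?_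
  rw [map_zero]
  have h1 := ConcreteCategory.congr_hom (limit.lift_π (coneLT X m) j) x
  have h2 : limit.π (restrictLT X m) j (L x) = X.map (homOfLE j.unop.2.le).op x := h1
  exact h2.trans (hx j.unop)

lemma aux_lim_surj (m : ℝ) (hlim : IsIso (limit.lift (restrictLT X m) (coneLT X m)))
    (y : ∀ r : {r : ℝ // r < m}, X.obj (op (r : ℝ)))
    (hy : ∀ (r r' : {r : ℝ // r < m}) (h : (r : ℝ) ≤ (r' : ℝ)),
      X.map (homOfLE h).op (y r') = y r) :
    ∃ x : X.obj (op m), ∀ r : {r : ℝ // r < m}, X.map (homOfLE r.2.le).op x = y r := by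
  set L := limit.lift (restrictLT X m) (coneLT X m) with hL
  let c : Cone (restrictLT X m) :=
    { pt := ModuleCat.of R R
      π :=
        { app := fun r => ModuleCat.ofHom (LinearMap.toSpanSingleton R _ (y r.unop))
          naturality := fun a b f => by
            dsimp [restrictLT]
            rw [Category.id_comp]
            apply ModuleCat.hom_ext
            apply LinearMap.ext
            intro a0
            have hba : (b.unop : ℝ) ≤ (a.unop : ℝ) := f.unop.le
            show a0 • y b.unop = X.map (homOfLE hba).op (a0 • y a.unop)
            rw [map_smul, hy b.unop a.unop hba] }
      }
  obtain ⟨x, hx⟩ := (ConcreteCategory.bijective_of_isIso L).2 (limit.lift _ c (1 : R))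
  refine ⟨x, fun r => ?_⟩
  have h1 : limit.π (restrictLT X m) (op r) (L x) = X.map (homOfLE r.2.le).op x :=
    ConcreteCategory.congr_hom (limit.lift_π (coneLT X m) (op r)) x
  have h2 : limit.π (restrictLT X m) (op r) (limit.lift _ c (1 : R)) = (1 : R) • y r :=
    ConcreteCategory.congr_hom (limit.lift_π c (op r)) (1 : R)
  have hx' : L x = (limit.lift (restrictLT X m) c) (1 : R) := hx
  rw [← h1, hx', h2, one_smul]

lemma aux_colim_surj (m : ℝ) (hcolim : IsIso (colimit.desc (restrictGT X m) (coconeGT X m)))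
    (y : X.obj (op m)) :
    ∃ (u : ℝ) (hu : m < u) (x : X.obj (op u)), X.map (homOfLE hu.le).op x = y := by
  haveI : Nonempty {t : ℝ // m < t} := ⟨⟨m + 1, lt_add_one m⟩⟩
  set D := colimit.desc (restrictGT X m) (coconeGT X m) with hD
  obtain ⟨c, hc⟩ := (ConcreteCategory.bijective_of_isIso D).2 y
  obtain ⟨j, x, hx⟩ := Concrete.colimit_exists_rep (restrictGT X m) c
  refine ⟨(j.unop : ℝ), j.unop.2, x, ?_⟩
  have h1 : D (colimit.ι (restrictGT X m) j x) = X.map (homOfLE j.unop.2.le).op x :=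
    ConcreteCategory.congr_hom (colimit.ι_desc (coconeGT X m) j) x
  rw [← hc, ← hx]
  exact h1.symm

lemma aux_colim_inj (m : ℝ) (hcolim : IsIso (colimit.desc (restrictGT X m) (coconeGT X m)))
    (u : ℝ) (hu : m < u) (x : X.obj (op u))
    (hx : X.map (homOfLE hu.le).op x = 0) :
    ∃ (k : ℝ) (hk1 : m < k) (hk2 : k ≤ u), X.map (homOfLE hk2).op x = 0 := by
  haveI : Nonempty {t : ℝ // m < t} := ⟨⟨m + 1, lt_add_one m⟩⟩
  set D := colimit.desc (restrictGT X m) (coconeGT X m) with hD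
  have hinj : Function.Injective D := (ConcreteCategory.bijective_of_isIso D).1
  set j : ({t : ℝ // m < t})ᵒᵖ := op ⟨u, hu⟩ with hj
  have h1 : D (colimit.ι (restrictGT X m) j x) = X.map (homOfLE hu.le).op x :=
    ConcreteCategory.congr_hom (colimit.ι_desc (coconeGT X m) j) x
  have h0 : colimit.ι (restrictGT X m) j x = colimit.ι (restrictGT X m) j 0 := by
    apply hinj
    rw [h1, hx, map_zero, map_zero]
    rfl
  obtain ⟨k, f, g, hk⟩ := Concrete.colimit_exists_of_rep_eq (restrictGT X m) (i := j) (j := j) x 0 h0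
  refine ⟨(k.unop : ℝ), k.unop.2, f.unop.le, ?_⟩
  rw [map_zero] at hk
  exact hk

end Aux

section Main

variable {R : Type} [Ring R] (X : ℝᵒᵖ ⥤ ModuleCat R)
  (hcolim : ∀ s : ℝ, IsIso (colimit.desc (restrictGT X s) (coconeGT X s)))
  (hlim : ∀ s : ℝ, IsIso (limit.lift (restrictLT X s) (coneLT X s)))

include hcolim hlim

lemma aux_inj_all : ∀ (s t : ℝ) (h : s ≤ t), Function.Injective (X.map (homOfLE h).op) := by
  intro s t h
  rw [injective_iff_map_eq_zero]
  intro x hx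
  set U : Set ℝ := {u | ∃ (_ : s ≤ u) (h2 : u ≤ t), X.map (homOfLE h2).op x = 0} with hU
  have hsU : s ∈ U := ⟨le_rfl, h, hx⟩
  have hne : U.Nonempty := ⟨s, hsU⟩
  have hbdd : BddAbove U := ⟨t, fun u hu => by obtain ⟨_, h2, _⟩ := hu; exact h2⟩
  have hsm : s ≤ sSup U := le_csSup hbdd hsU
  have hmt : sSup U ≤ t := csSup_le hne fun u hu => by obtain ⟨_, h2, _⟩ := hu; exact h2
  have hxm : X.map (homOfLE hmt).op x = 0 := by
    apply aux_lim_inj X (sSup U) (hlim _)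
    intro r
    rw [aux_map_map]
    rcases lt_or_ge (r : ℝ) s with hr | hr
    · rw [← aux_map_map X h hr.le, hx, map_zero]
    · obtain ⟨u, huU, hru⟩ := exists_lt_of_lt_csSup hne r.2
      obtain ⟨h1u, h2u, hxu⟩ := huU
      rw [← aux_map_map X h2u hru.le, hxu, map_zero]
  have hmU : sSup U ∈ U := ⟨hsm, hmt, hxm⟩
  rcases eq_or_lt_of_le hmt with heq | hlt
  · have htU : t ∈ U := heq ▸ hmU
    obtain ⟨_, h2, hx0⟩ := htU
    rw [← aux_map_self X h2 x]
    exact hx0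
  · exfalso
    obtain ⟨k, hk1, hk2, hk3⟩ := aux_colim_inj X (sSup U) (hcolim _) t hlt x hxm
    have hkU : k ∈ U := ⟨hsm.trans hk1.le, hk2, hk3⟩
    exact absurd (le_csSup hbdd hkU) (not_le.2 hk1)

lemma aux_surj_all : ∀ (s t : ℝ) (h : s ≤ t), Function.Surjective (X.map (homOfLE h).op) := by
  intro s t h y
  set V : Set ℝ := {u | ∃ (h1 : s ≤ u) (_ : u ≤ t) (x : X.obj (op u)),
    X.map (homOfLE h1).op x = y} with hV
  have hsV : s ∈ V := ⟨le_rfl, h, y, aux_map_self X le_rfl y⟩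
  have hne : V.Nonempty := ⟨s, hsV⟩
  have hbdd : BddAbove V := ⟨t, fun u hu => by obtain ⟨_, h2, _⟩ := hu; exact h2⟩
  have hsm : s ≤ sSup V := le_csSup hbdd hsV
  have hmt : sSup V ≤ t := csSup_le hne fun u hu => by obtain ⟨_, h2, _⟩ := hu; exact h2
  -- there is a lift of y at sSup V
  have hmV : ∃ xm : X.obj (op (sSup V)), X.map (homOfLE hsm).op xm = y := by
    rcases eq_or_lt_of_le hsm with heq | hsm'
    · have key : ∀ (m' : ℝ) (_ : s = m') (hsm' : s ≤ m'),
          ∃ xm : X.obj (op m'), X.map (homOfLE hsm').op xm = y := by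
        rintro m' rfl hsm'
        exact ⟨y, aux_map_self X hsm' y⟩
      exact key (sSup V) heq hsm
    · have lift_ex : ∀ (r : ℝ) (hsr : s ≤ r), r < sSup V →
          ∃ z : X.obj (op r), X.map (homOfLE hsr).op z = y := by
        intro r hsr hrm
        obtain ⟨u, huV, hru⟩ := exists_lt_of_lt_csSup hne hrm
        obtain ⟨h1u, h2u, xu, hxu⟩ := huV
        refine ⟨X.map (homOfLE hru.le).op xu, ?_⟩
        rw [aux_map_map]
        exact hxu
      set g : ∀ r : {r : ℝ // r < sSup V}, X.obj (op (r : ℝ)) := fun r =>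
        if hsr : s ≤ (r : ℝ) then (lift_ex r hsr r.2).choose
        else X.map (homOfLE (not_le.1 hsr).le).op y with hg
      have compat : ∀ (r r' : {r : ℝ // r < sSup V}) (hle : (r : ℝ) ≤ (r' : ℝ)),
          X.map (homOfLE hle).op (g r') = g r := by
        intro r r' hle
        by_cases hsr : s ≤ (r : ℝ)
        · have hsr' : s ≤ (r' : ℝ) := hsr.trans hle
          simp only [hg, dif_pos hsr, dif_pos hsr']
          apply aux_inj_all X hcolim hlim s r hsr
          rw [aux_map_map]
          exact ((lift_ex r' hsr' r'.2).choose_spec).trans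
            ((lift_ex r hsr r.2).choose_spec).symm
        · have hrs : (r : ℝ) ≤ s := (not_le.1 hsr).le
          by_cases hsr' : s ≤ (r' : ℝ)
          · simp only [hg, dif_pos hsr', dif_neg hsr]
            exact (aux_map_map X hsr' hrs _).symm.trans
              (congrArg (fun z => X.map (homOfLE hrs).op z)
                (lift_ex r' hsr' r'.2).choose_spec)
          · simp only [hg, dif_neg hsr, dif_neg hsr']
            rw [aux_map_map]
      obtain ⟨xm, hxm⟩ := aux_lim_surj X (sSup V) (hlim _) g compat
      refine ⟨xm, ?_⟩
      have h1 := hxm ⟨s, hsm'⟩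
      have h2 : g ⟨s, hsm'⟩ = (lift_ex s le_rfl hsm').choose := by
        simp only [hg, dif_pos (le_refl s)]
      rw [h2] at h1
      have h3 := (lift_ex s le_rfl hsm').choose_spec
      rw [aux_map_self X le_rfl] at h3
      rw [← h3]
      exact h1
  obtain ⟨xm, hxm⟩ := hmV
  have hmVmem : sSup V ∈ V := ⟨hsm, hmt, xm, hxm⟩
  rcases eq_or_lt_of_le hmt with heq | hlt
  · have htV : t ∈ V := heq ▸ hmVmem
    obtain ⟨h1, _, x, hx⟩ := htV
    exact ⟨x, hx⟩
  · exfalso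
    obtain ⟨u, hu, x', hx'⟩ := aux_colim_surj X (sSup V) (hcolim _) xm
    have hmu' : sSup V < min u t := lt_min hu hlt
    have hu'V : min u t ∈ V := by
      refine ⟨hsm.trans hmu'.le, min_le_right _ _,
        X.map (homOfLE (min_le_left u t)).op x', ?_⟩
      rw [aux_map_map]
      have e1 : X.map (homOfLE ((hsm.trans hmu'.le).trans (min_le_left u t))).op x'
          = X.map (homOfLE hsm).op (X.map (homOfLE hu.le).op x') := by
        rw [aux_map_map]
      rw [e1, hx', hxm]
    exact absurd (le_csSup hbdd hu'V) (not_le.2 hmu')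

end Main

/-- Constant functor criterion for `R`-modules: if for every `s ∈ ℝ` the canonical maps
`colim_{t>s} X_t → X_s` and `X_s → lim_{r<s} X_r` are isomorphisms, then all transition
maps `X_t → X_s` (for `s ≤ t`) are isomorphisms, i.e. `X` is constant. -/
theorem constant_functor_criterion_modules {R : Type} [Ring R]
    (X : ℝᵒᵖ ⥤ ModuleCat R)
    (hcolim : ∀ s : ℝ, IsIso (colimit.desc (restrictGT X s) (coconeGT X s)))
    (hlim : ∀ s : ℝ, IsIso (limit.lift (restrictLT X s) (coneLT X s))) :
    ∀ (s t : ℝ) (h : s ≤ t), IsIso (X.map (homOfLE h).op) := by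
  intro s t h
  have : Mono (X.map (homOfLE h).op) :=
    (ModuleCat.mono_iff_injective _).mpr (aux_inj_all X hcolim hlim s t h)
  have : Epi (X.map (homOfLE h).op) :=
    (ModuleCat.epi_iff_surjective _).mpr (aux_surj_all X hcolim hlim s t h)
  exact isIso_of_mono_of_epi _
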